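/- Let ε_E ∈ O_E^× be a unit that is not a square in O_E^×, set ξ := diag(ε_E, (ε̄_E)^{−1}), and let c ∈ O_E^× satisfy c² = ε_E·ε̄_E (such c exists by Hensel's lemma since ε_E·ε̄_E ∈ O_F^× and q is odd). Set h := [[0, −c],[c^{−1}, 0]]. Then h belongs to SU(1,1)(F) = {g ∈ G : det g = 1}, and ξ·T_{1,1}·ξ^{−1} = h·T_{1,1}·h^{−1}. -/

import Mathlib

/-!
Since `(σ c)² = σ (ε_E ε̄_E) = c²`, we have `σ c = ± c`. If `σ c = c`, then `c ∈ O_F^×` and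
`ε_E / c` is a norm-one unit of `O_E`; both are squares in `E` (units of `O_F`: every unit residue
class of `F` is a square or `ε` times a square, by counting in the finite residue field of odd
order, and Hensel lifts; norm-one units: Hilbert 90), so `ε_E` would be a square. Hence
`σ c = -c`, which makes `h` unitary. Finally `ξ⁻¹ h` is a scalar multiple of `[[0,-1],[1,0]]`
because `c² = ε_E ε̄_E`, and conjugation by that matrix acts on `T_{1,1}` by `b ↦ -b`.
-/

open Matrix
open scoped Pointwise

noncomputable section

/-- Ambient data for the paper: `E` is the unramified quadratic extension `F(√ε)` of a
nonarchimedean local field `F` of odd residual characteristic.  The field `F` is realized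
as the fixed field of the nontrivial `F`-automorphism `σ` of `E`; `ν` is the discrete
valuation of `E` (extending the valuation of `F` normalized by `ν ϖ = 1` at a uniformizer
`ϖ` of `F`, and still surjecting onto `ℤ` since `E/F` is unramified); `q` is the (odd)
cardinality of the residue field of `F` (so `q²` is that of `E`); `ε ∈ O_F^×` is a
non-square unit and `sqε = √ε` generates `E` over `F`.  The standard facts about the
norm map and squares are included as fields. -/
structure Setting (E : Type*) [Field E] where
  /-- the nontrivial `F`-automorphism of `E`, written `x̄ = σ x` -/
  σ : E →+* E
  σσ : ∀ x, σ (σ x) = x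
  σ_ne_id : σ ≠ RingHom.id E
  /-- the valuation (only its values at nonzero elements matter) -/
  ν : E → ℤ
  ν_mul : ∀ {x y : E}, x ≠ 0 → y ≠ 0 → ν (x * y) = ν x + ν y
  ν_add : ∀ {x y : E}, x ≠ 0 → y ≠ 0 → x + y ≠ 0 → min (ν x) (ν y) ≤ ν (x + y)
  ν_σ : ∀ x, ν (σ x) = ν x
  ν_surj : ∀ n : ℤ, ∃ x : E, x ≠ 0 ∧ ν x = n
  /-- a uniformizer of `F` -/
  ϖ : E
  ϖ_ne_zero : ϖ ≠ 0
  ϖ_fixed : σ ϖ = ϖ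
  ν_ϖ : ν ϖ = 1
  /-- the residual cardinality of `F` -/
  q : ℕ
  q_odd : Odd q
  one_lt_q : 1 < q
  /-- a non-square unit of `O_F` -/
  ε : E
  ε_fixed : σ ε = ε
  ε_ne_zero : ε ≠ 0
  ν_ε : ν ε = 0
  ε_nonsquare : ¬ ∃ f : E, σ f = f ∧ f * f = ε
  /-- a square root `√ε ∈ E` of `ε` -/
  sqε : E
  sqε_sq : sqε * sqε = ε
  sqε_conj : σ sqε = -sqε
  /-- `E = F(√ε)` -/
  generates : ∀ x : E, ∃ a b : E, σ a = a ∧ σ b = b ∧ x = a + b * sqε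
  /-- the norm maps `O_E^×` onto `O_F^×` -/
  norm_surj_units : ∀ y : E, σ y = y → y ≠ 0 → ν y = 0 →
    ∃ x : E, x ≠ 0 ∧ ν x = 0 ∧ x * σ x = y
  /-- the norm maps `1 + p_E^d` onto `1 + p_F^d` for every `d ≥ 1` -/
  norm_surj_one_add : ∀ d : ℤ, 1 ≤ d → ∀ y : E, σ y = y → (y - 1 = 0 ∨ d ≤ ν (y - 1)) →
    ∃ x : E, (x - 1 = 0 ∨ d ≤ ν (x - 1)) ∧ x * σ x = y
  /-- the residue field of `F` has `q` elements -/
  residue_F : ∃ R : Finset E, R.card = q ∧ (∀ r ∈ R, σ r = r ∧ (r = 0 ∨ 0 ≤ ν r)) ∧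
    ∀ x : E, σ x = x → (x = 0 ∨ 0 ≤ ν x) →
      ∃! r, r ∈ R ∧ (x - r = 0 ∨ 1 ≤ ν (x - r))
  /-- the residue field of `E` has `q²` elements -/
  residue_E : ∃ R : Finset E, R.card = q ^ 2 ∧ (∀ r ∈ R, r = 0 ∨ 0 ≤ ν r) ∧
    ∀ x : E, (x = 0 ∨ 0 ≤ ν x) →
      ∃! r, r ∈ R ∧ (x - r = 0 ∨ 1 ≤ ν (x - r))
  /-- Hensel: a unit of `O_E` that is a square modulo `p_E` is a square (residue char. odd) -/
  hensel_sq : ∀ u w : E, u ≠ 0 → ν u = 0 → w ≠ 0 → ν w = 0 →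
    (w * w - u = 0 ∨ 1 ≤ ν (w * w - u)) → ∃ v : E, v * v = u

namespace Setting

variable {E : Type*} [Field E] (S : Setting E)

/-- `x` lies in the ring of integers `O_E`. -/
def inOE (x : E) : Prop := x = 0 ∨ 0 ≤ S.ν x

/-- `x` lies in the (fractional, if `d ≤ 0`) ideal `p_E^d`. -/
def inpE (d : ℤ) (x : E) : Prop := x = 0 ∨ d ≤ S.ν x

/-- `x` is a unit of `O_E`. -/
def unitOE (x : E) : Prop := x ≠ 0 ∧ S.ν x = 0

/-- `x` lies in the subfield `F` (the fixed field of `σ`). -/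
def inF (x : E) : Prop := S.σ x = x

/-- `x` is a unit of `O_F`. -/
def unitOF (x : E) : Prop := S.σ x = x ∧ x ≠ 0 ∧ S.ν x = 0

/-- `x` lies in `E¹`, i.e. has norm one. -/
def normOne (x : E) : Prop := x * S.σ x = 1

/-- `x ∈ √ε·F`. -/
def inSqεF (x : E) : Prop := ∃ f : E, S.σ f = f ∧ x = S.sqε * f

/-- Entrywise application of `σ` to a matrix, `ḡ`. -/
def mbar (g : Matrix (Fin 2) (Fin 2) E) : Matrix (Fin 2) (Fin 2) E :=
  Matrix.of fun i j => S.σ (g i j)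

/-- The antidiagonal matrix `w = [[0,1],[1,0]]` defining the hermitian form. -/
def wmat (_S : Setting E) : Matrix (Fin 2) (Fin 2) E := !![0, 1; 1, 0]

/-- Membership in `G = U(1,1)(F) = {g : ḡᵀ·w·g = w}`. -/
def inG (g : Matrix (Fin 2) (Fin 2) E) : Prop :=
  (S.mbar g)ᵀ * S.wmat * g = S.wmat

/-- `G = U(1,1)(F)`, as a set of 2×2 matrices over `E`. -/
def Gset : Set (Matrix (Fin 2) (Fin 2) E) := {g | S.inG g}

/-- `G_der = SU(1,1)(F) = {g ∈ G : det g = 1}`. -/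
def Gder : Set (Matrix (Fin 2) (Fin 2) E) := {g | S.inG g ∧ g.det = 1}

/-- The standard maximal compact subgroup `K` of `G` (entries in `O_E`). -/
def Kset : Set (Matrix (Fin 2) (Fin 2) E) := {g | S.inG g ∧ ∀ i j, S.inOE (g i j)}

/-- The congruence subgroup `K_d = {k ∈ K : k − 1 ∈ p_E^d·M₂(O_E)}`. -/
def Kfil (d : ℤ) : Set (Matrix (Fin 2) (Fin 2) E) :=
  {g | g ∈ S.Kset ∧ ∀ i j, S.inpE d ((g - 1) i j)}

/-- The subgroup `B` of upper triangular matrices in `K`. -/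
def Bset : Set (Matrix (Fin 2) (Fin 2) E) := {g | g ∈ S.Kset ∧ g 1 0 = 0}

/-- The subgroup `B^op` of lower triangular matrices in `K`. -/
def Bop : Set (Matrix (Fin 2) (Fin 2) E) := {g | g ∈ S.Kset ∧ g 0 1 = 0}

/-- The center `Z = {z·I : z ∈ E¹}` of `G`. -/
def Zset : Set (Matrix (Fin 2) (Fin 2) E) :=
  {g | ∃ z : E, S.normOne z ∧ g = z • (1 : Matrix (Fin 2) (Fin 2) E)}

/-- The matrix `α^t = diag(ϖ^{−t}, ϖ^t)`. -/
def αmat (t : ℕ) : Matrix (Fin 2) (Fin 2) E := !![(S.ϖ ^ t)⁻¹, 0; 0, S.ϖ ^ t]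

/-- The matrix `η = diag(1, ϖ)` (it normalizes `G`). -/
def ηmat : Matrix (Fin 2) (Fin 2) E := !![1, 0; 0, S.ϖ]

/-- The matrix `η⁻¹ = diag(1, ϖ⁻¹)`. -/
def ηinv : Matrix (Fin 2) (Fin 2) E := !![1, 0; 0, S.ϖ⁻¹]

/-- The torus `T_{γ₁,γ₂} = {[[a,bγ₁],[bγ₂,a]] : a·ā + b·b̄·γ₁γ₂ = 1, ā·b ∈ √ε·F}`. -/
def Tset (γ₁ γ₂ : E) : Set (Matrix (Fin 2) (Fin 2) E) :=
  {g | ∃ a b : E, g = !![a, b * γ₁; b * γ₂, a] ∧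
    a * S.σ a + b * S.σ b * (γ₁ * γ₂) = 1 ∧ S.inSqεF (S.σ a * b)}

/-- The Moy–Prasad filtration subgroup `G_{y,r}` of `G` (for `r > 0`). -/
def Gfil (y r : ℚ) : Set (Matrix (Fin 2) (Fin 2) E) :=
  {g | S.inG g ∧ S.inpE ⌈r⌉ (g 0 0 - 1) ∧ S.inpE ⌈r⌉ (g 1 1 - 1) ∧
    S.inpE ⌈r - y⌉ (g 0 1) ∧ S.inpE ⌈r + y⌉ (g 1 0)}

/-- `G_{y,0+} = ⋃_{r>0} G_{y,r}`. -/
def Gfil0plus (y : ℚ) : Set (Matrix (Fin 2) (Fin 2) E) :=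
  {g | ∃ r : ℚ, 0 < r ∧ g ∈ S.Gfil y r}

end Setting

theorem Finset.even_card_of_involution {α : Type*} {s : Finset α} (g : α → α)
    (hg_mem : ∀ a ∈ s, g a ∈ s) (hg_inv : ∀ a ∈ s, g (g a) = a) (hg_ne : ∀ a ∈ s, g a ≠ a) :
    Even s.card := by
  have hsum : ∑ _a ∈ s, (1 : ZMod 2) = 0 :=
    Finset.sum_involution (fun a _ => g a) (fun _ _ => by decide) (fun a ha _ => hg_ne a ha)
      hg_mem hg_inv
  rwa [Finset.sum_const, nsmul_one, ZMod.natCast_eq_zero_iff_even] at hsum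

namespace Setting

variable {E : Type*} [Field E] (S : Setting E)

theorem ν_one : S.ν 1 = 0 := by
  have h := S.ν_mul (one_ne_zero' E) (one_ne_zero' E)
  rw [one_mul] at h
  omega

theorem ν_neg (x : E) : S.ν (-x) = S.ν x := by
  have h := S.ν_mul (neg_ne_zero.2 (one_ne_zero' E)) (neg_ne_zero.2 (one_ne_zero' E))
  rw [neg_mul_neg, one_mul, S.ν_one] at h
  rcases eq_or_ne x 0 with rfl | hx
  · rw [neg_zero]
  · rw [← neg_one_mul, S.ν_mul (neg_ne_zero.2 one_ne_zero) hx]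
    omega

theorem ν_inv {x : E} (hx : x ≠ 0) : S.ν x⁻¹ = -S.ν x := by
  have h := S.ν_mul hx (inv_ne_zero hx)
  rw [mul_inv_cancel₀ hx, S.ν_one] at h
  omega

variable {S} {d e : ℤ} {x y u : E}

theorem inpE_mono (hde : d ≤ e) (hx : S.inpE e x) : S.inpE d x :=
  hx.imp_right hde.trans

theorem inpE_add (hx : S.inpE d x) (hy : S.inpE d y) : S.inpE d (x + y) := by
  by_cases hx0 : x = 0
  · rwa [hx0, zero_add]
  by_cases hy0 : y = 0
  · rwa [hy0, add_zero]
  by_cases hxy : x + y = 0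
  · exact Or.inl hxy
  exact Or.inr ((le_min (hx.resolve_left hx0) (hy.resolve_left hy0)).trans (S.ν_add hx0 hy0 hxy))

theorem inpE_neg (hx : S.inpE d x) : S.inpE d (-x) := by
  rcases hx with h | h
  · exact Or.inl (by rw [h, neg_zero])
  · exact Or.inr (by rwa [S.ν_neg])

theorem inpE_sub (hx : S.inpE d x) (hy : S.inpE d y) : S.inpE d (x - y) := by
  rw [sub_eq_add_neg]
  exact inpE_add hx (inpE_neg hy)

theorem inpE_σ (hx : S.inpE d x) : S.inpE d (S.σ x) := by
  rcases hx with h | h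
  · exact Or.inl (by rw [h, map_zero])
  · exact Or.inr (by rwa [S.ν_σ])

theorem inpE_mul (hx : S.inpE d x) (hy : S.inpE e y) : S.inpE (d + e) (x * y) := by
  by_cases hx0 : x = 0
  · exact Or.inl (by rw [hx0, zero_mul])
  by_cases hy0 : y = 0
  · exact Or.inl (by rw [hy0, mul_zero])
  have := hx.resolve_left hx0
  have := hy.resolve_left hy0
  exact Or.inr (by rw [S.ν_mul hx0 hy0]; omega)

theorem inpE_one_or_of_mul (hx : S.inOE x) (hy : S.inOE y) (h : S.inpE 1 (x * y)) :
    S.inpE 1 x ∨ S.inpE 1 y := by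
  by_cases hx0 : x = 0
  · exact Or.inl (Or.inl hx0)
  by_cases hy0 : y = 0
  · exact Or.inr (Or.inl hy0)
  have hxy := h.resolve_left (mul_ne_zero hx0 hy0)
  rw [S.ν_mul hx0 hy0] at hxy
  have := hx.resolve_left hx0
  have := hy.resolve_left hy0
  by_cases h1 : 1 ≤ S.ν x
  · exact Or.inl (Or.inr h1)
  · exact Or.inr (Or.inr (by omega))

theorem inOE_of_unitOE (hx : S.unitOE x) : S.inOE x := Or.inr hx.2.ge

theorem unitOE_mul (hx : S.unitOE x) (hy : S.unitOE y) : S.unitOE (x * y) :=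
  ⟨mul_ne_zero hx.1 hy.1, by rw [S.ν_mul hx.1 hy.1, hx.2, hy.2, add_zero]⟩

theorem unitOE_σ (hx : S.unitOE x) : S.unitOE (S.σ x) :=
  ⟨(map_ne_zero S.σ).2 hx.1, by rw [S.ν_σ, hx.2]⟩

theorem unitOE_of_mul_self (hx : S.unitOE (x * x)) : S.unitOE x := by
  have hx0 : x ≠ 0 := fun h => hx.1 (by rw [h, mul_zero])
  have := S.ν_mul hx0 hx0
  have := hx.2
  exact ⟨hx0, by omega⟩

theorem unitOE_iff_not_inpE (hx : S.inOE x) : S.unitOE x ↔ ¬ S.inpE 1 x := by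
  constructor
  · rintro ⟨hx0, hν⟩ (h | h)
    · exact hx0 h
    · omega
  · intro h
    have hx0 : x ≠ 0 := fun h0 => h (Or.inl h0)
    have hν : 0 ≤ S.ν x := hx.resolve_left hx0
    exact ⟨hx0, by by_contra hne; exact h (Or.inr (by omega))⟩

theorem inpE_of_unitOE_mul (hu : S.unitOE u) (h : S.inpE d (u * x)) : S.inpE d x := by
  by_cases hx0 : x = 0
  · exact Or.inl hx0
  have := h.resolve_left (mul_ne_zero hu.1 hx0)
  rw [S.ν_mul hu.1 hx0, hu.2] at this
  exact Or.inr (by omega)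

theorem unitOE_of_inpE_sub (hx : S.unitOE x) (h : S.inpE 1 (x - y)) : S.unitOE y := by
  have hyO : S.inpE 0 y := by
    simpa using inpE_sub (inOE_of_unitOE hx) (inpE_mono zero_le_one h)
  refine (unitOE_iff_not_inpE hyO).2 fun hy => ?_
  refine (unitOE_iff_not_inpE (inOE_of_unitOE hx)).1 hx ?_
  simpa using inpE_add h hy

theorem inOE_one : S.inOE (1 : E) := Or.inr S.ν_one.ge

theorem unitOE_one : S.unitOE (1 : E) := ⟨one_ne_zero, S.ν_one⟩

theorem unitOE_two_of_not_inpE (h : ¬ S.inpE 1 2) : S.unitOE (2 : E) := by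
  have h2 : S.inOE (2 : E) := by
    rw [← one_add_one_eq_two]
    exact inpE_add inOE_one inOE_one
  exact (unitOE_iff_not_inpE h2).2 h

variable (S) in
theorem sqε_unitOE : S.unitOE S.sqε :=
  unitOE_of_mul_self (by rw [S.sqε_sq]; exact ⟨S.ε_ne_zero, S.ν_ε⟩)

variable (S) in
/-- Representatives of `O_F / p_F`, with a chosen representative `rep x` of each `x ∈ O_F`. -/
structure ResidueSystem where
  reps : Finset E
  card_reps : reps.card = S.q
  inF_of_mem : ∀ r ∈ reps, S.inF r
  inOE_of_mem : ∀ r ∈ reps, S.inOE r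
  rep : E → E
  rep_mem : ∀ x, S.inF x → S.inOE x → rep x ∈ reps
  inpE_sub_rep : ∀ x, S.inF x → S.inOE x → S.inpE 1 (x - rep x)
  eq_of_inpE_sub : ∀ r ∈ reps, ∀ s ∈ reps, S.inpE 1 (r - s) → r = s

variable (S) in
theorem nonempty_residueSystem : Nonempty S.ResidueSystem := by
  obtain ⟨R, hcard, hR, hrep⟩ := S.residue_F
  have hchoice : ∀ x, ∃ r, S.inF x → S.inOE x → r ∈ R ∧ S.inpE 1 (x - r) := fun x => by
    by_cases hx : S.inF x ∧ S.inOE x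
    · obtain ⟨r, hr, -⟩ := hrep x hx.1 hx.2
      exact ⟨r, fun _ _ => hr⟩
    · exact ⟨0, fun h1 h2 => absurd ⟨h1, h2⟩ hx⟩
  choose rep hrep_spec using hchoice
  refine ⟨⟨R, hcard, fun r hr => (hR r hr).1, fun r hr => (hR r hr).2, rep,
    fun x h1 h2 => (hrep_spec x h1 h2).1, fun x h1 h2 => (hrep_spec x h1 h2).2, ?_⟩⟩
  intro r hr s hs hrs
  obtain ⟨t, -, ht⟩ := hrep r (hR r hr).1 (hR r hr).2
  rw [ht r ⟨hr, Or.inl (sub_self r)⟩, ht s ⟨hs, hrs⟩]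

namespace ResidueSystem

variable (R : S.ResidueSystem)

theorem rep_eq_of_inpE_sub (hx : S.inF x) (hxO : S.inOE x) (hy : y ∈ R.reps)
    (h : S.inpE 1 (x - y)) : R.rep x = y := by
  refine R.eq_of_inpE_sub _ (R.rep_mem x hx hxO) y hy ?_
  have e : R.rep x - y = -(x - R.rep x) + (x - y) := by ring
  rw [e]
  exact inpE_add (inpE_neg (R.inpE_sub_rep x hx hxO)) h

theorem inpE_sub_of_rep_eq (hx : S.inF x) (hxO : S.inOE x) (hy : S.inF y) (hyO : S.inOE y)
    (h : R.rep x = R.rep y) : S.inpE 1 (x - y) := by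
  have e : x - y = (x - R.rep x) - (y - R.rep y) := by rw [h]; ring
  rw [e]
  exact inpE_sub (R.inpE_sub_rep x hx hxO) (R.inpE_sub_rep y hy hyO)

open scoped Classical in
def unitReps : Finset E := R.reps.filter fun x => S.unitOE x

theorem mem_unitReps : x ∈ R.unitReps ↔ x ∈ R.reps ∧ S.unitOE x := by
  simp only [unitReps, Finset.mem_filter]

theorem unitOF_of_mem_unitReps (hx : x ∈ R.unitReps) : S.unitOF x :=
  ⟨R.inF_of_mem x (R.mem_unitReps.1 hx).1, (R.mem_unitReps.1 hx).2⟩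

theorem rep_mem_unitReps (hx : S.unitOF x) : R.rep x ∈ R.unitReps :=
  R.mem_unitReps.2 ⟨R.rep_mem x hx.1 (inOE_of_unitOE hx.2),
    unitOE_of_inpE_sub hx.2 (R.inpE_sub_rep x hx.1 (inOE_of_unitOE hx.2))⟩

/-- The fibres of `t ↦ rep (g t)` have at most two elements, `t` and `rep (-t)`. -/
theorem card_unitReps_le_two_mul_card_image [DecidableEq E] (g : E → E)
    (hg : ∀ t ∈ R.unitReps, S.unitOF (g t))
    (hg_sq : ∀ t ∈ R.unitReps, ∀ s ∈ R.unitReps, S.inpE 1 (g t - g s) →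
      S.inpE 1 (t * t - s * s)) :
    R.unitReps.card ≤ 2 * (R.unitReps.image fun t => R.rep (g t)).card := by
  refine Finset.card_le_mul_card_image _ 2 fun b hb => ?_
  obtain ⟨t, ht, rfl⟩ := Finset.mem_image.1 hb
  have htO := inOE_of_unitOE (R.unitOF_of_mem_unitReps ht).2
  refine (Finset.card_le_card (t := {t, R.rep (-t)}) fun s hs => ?_).trans Finset.card_le_two
  obtain ⟨hs, hst⟩ := Finset.mem_filter.1 hs
  have hsO := inOE_of_unitOE (R.unitOF_of_mem_unitReps hs).2
  have hsq := hg_sq s hs t ht (R.inpE_sub_of_rep_eq (hg s hs).1 (inOE_of_unitOE (hg s hs).2)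
    (hg t ht).1 (inOE_of_unitOE (hg t ht).2) hst)
  rw [show s * s - t * t = (s - t) * (s + t) by ring] at hsq
  rcases inpE_one_or_of_mul (inpE_sub hsO htO) (inpE_add hsO htO) hsq with h | h
  · rw [R.eq_of_inpE_sub s (R.mem_unitReps.1 hs).1 t (R.mem_unitReps.1 ht).1 h]
    exact Finset.mem_insert_self _ _
  · have hnt : S.inF (-t) := by rw [inF, map_neg, (R.unitOF_of_mem_unitReps ht).1]
    rw [R.rep_eq_of_inpE_sub hnt (inpE_neg htO) (R.mem_unitReps.1 hs).1
      (by rw [show -t - s = -(s + t) by ring]; exact inpE_neg h)]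
    exact Finset.mem_insert_of_mem (Finset.mem_singleton_self _)

end ResidueSystem

variable (S) in
/-- If `2 ∈ p_F`, then `r ↦ rep (r + 1)` would be a fixed-point-free involution of the `q`
representatives, but `q` is odd. -/
theorem unitOE_two : S.unitOE (2 : E) := by
  obtain ⟨R⟩ := S.nonempty_residueSystem
  refine unitOE_two_of_not_inpE fun h2 => ?_
  have hF : ∀ r ∈ R.reps, S.inF (r + 1) := fun r hr => by
    rw [inF, map_add, map_one, R.inF_of_mem r hr]
  have hO : ∀ r ∈ R.reps, S.inOE (r + 1) := fun r hr =>
    inpE_add (R.inOE_of_mem r hr) inOE_one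
  refine Nat.not_even_iff_odd.2 S.q_odd (R.card_reps ▸
    Finset.even_card_of_involution (fun r => R.rep (r + 1))
      (fun r hr => R.rep_mem _ (hF r hr) (hO r hr)) (fun r hr => ?_) (fun r hr hfix => ?_))
  · have hr' := R.rep_mem _ (hF r hr) (hO r hr)
    refine R.rep_eq_of_inpE_sub (hF _ hr') (hO _ hr') hr ?_
    have e : R.rep (r + 1) + 1 - r = -(r + 1 - R.rep (r + 1)) + 2 := by ring
    rw [e]
    exact inpE_add (inpE_neg (R.inpE_sub_rep _ (hF r hr) (hO r hr))) h2
  · have h1 := R.inpE_sub_rep _ (hF r hr) (hO r hr)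
    rw [hfix, add_sub_cancel_left] at h1
    exact (unitOE_iff_not_inpE inOE_one).1 unitOE_one h1

/-- `t² ≡ ε s²` would put both conjugates `t ± √ε s` in `p_E`, hence `2 t ∈ p_E`. -/
theorem not_inpE_mul_self_sub_ε_mul {t s : E} (ht : S.unitOF t) (hs : S.inF s)
    (hsO : S.inOE s) : ¬ S.inpE 1 (t * t - S.ε * (s * s)) := by
  intro h
  have htO := inOE_of_unitOE ht.2
  have hsO' : S.inOE (S.sqε * s) := inpE_mul (inOE_of_unitOE S.sqε_unitOE) hsO
  have hconj₁ : S.σ (t + S.sqε * s) = t - S.sqε * s := by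
    rw [map_add, map_mul, ht.1, hs, S.sqε_conj]; ring
  have hconj₂ : S.σ (t - S.sqε * s) = t + S.sqε * s := by
    rw [← hconj₁, S.σσ]
  rw [show t * t - S.ε * (s * s) = (t + S.sqε * s) * (t - S.sqε * s) by
    rw [← S.sqε_sq]; ring] at h
  have hboth : S.inpE 1 (t + S.sqε * s) ∧ S.inpE 1 (t - S.sqε * s) := by
    rcases inpE_one_or_of_mul (inpE_add htO hsO') (inpE_sub htO hsO') h with h | h
    · exact ⟨h, hconj₁ ▸ inpE_σ h⟩
    · exact ⟨hconj₂ ▸ inpE_σ h, h⟩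
  refine (unitOE_iff_not_inpE (inOE_of_unitOE (unitOE_mul S.unitOE_two ht.2))).1
    (unitOE_mul S.unitOE_two ht.2) ?_
  rw [two_mul]
  simpa using inpE_add hboth.1 hboth.2

/-- Counting: the squares and the `ε`-multiples of squares each fill at least half of the unit
residue classes of `O_F`, and they are disjoint, so together they fill all of them. -/
theorem exists_unitOE_mul_self_sub {f : E} (hf : S.unitOF f) :
    ∃ w, S.unitOE w ∧ S.inpE 1 (w * w - f) := by
  classical
  obtain ⟨R⟩ := S.nonempty_residueSystem
  have hsq : ∀ t ∈ R.unitReps, S.unitOF (t * t) := fun t ht =>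
    have ht := R.unitOF_of_mem_unitReps ht
    ⟨by rw [map_mul, ht.1], unitOE_mul ht.2 ht.2⟩
  have hε : S.unitOE S.ε := ⟨S.ε_ne_zero, S.ν_ε⟩
  have hεsq : ∀ t ∈ R.unitReps, S.unitOF (S.ε * (t * t)) := fun t ht =>
    ⟨by rw [map_mul, S.ε_fixed, (hsq t ht).1], unitOE_mul hε (hsq t ht).2⟩
  set A := R.unitReps.image fun t => R.rep (t * t)
  set B := R.unitReps.image fun t => R.rep (S.ε * (t * t))
  have hA : R.unitReps.card ≤ 2 * A.card :=
    R.card_unitReps_le_two_mul_card_image _ hsq fun _ _ _ _ h => h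
  have hB : R.unitReps.card ≤ 2 * B.card :=
    R.card_unitReps_le_two_mul_card_image _ hεsq fun _ _ _ _ h =>
      inpE_of_unitOE_mul hε (by rwa [mul_sub])
  have hAU : A ⊆ R.unitReps := Finset.image_subset_iff.2 fun t ht =>
    R.rep_mem_unitReps (hsq t ht)
  have hBU : B ⊆ R.unitReps := Finset.image_subset_iff.2 fun t ht =>
    R.rep_mem_unitReps (hεsq t ht)
  have hAB : Disjoint A B := by
    refine Finset.disjoint_left.2 fun b hbA hbB => ?_
    obtain ⟨t, ht, rfl⟩ := Finset.mem_image.1 hbA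
    obtain ⟨s, hs, hst⟩ := Finset.mem_image.1 hbB
    have hs' := R.unitOF_of_mem_unitReps hs
    exact not_inpE_mul_self_sub_ε_mul (R.unitOF_of_mem_unitReps ht) hs'.1
      (inOE_of_unitOE hs'.2) (R.inpE_sub_of_rep_eq (hsq t ht).1 (inOE_of_unitOE (hsq t ht).2)
        (hεsq s hs).1 (inOE_of_unitOE (hεsq s hs).2) hst.symm)
  have hcover : A ∪ B = R.unitReps :=
    Finset.eq_of_subset_of_card_le (Finset.union_subset hAU hBU)
      (by rw [Finset.card_union_of_disjoint hAB]; omega)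
  have hfO := inOE_of_unitOE hf.2
  rcases Finset.mem_union.1 (hcover ▸ R.rep_mem_unitReps hf) with hfA | hfB
  · obtain ⟨t, ht, htf⟩ := Finset.mem_image.1 hfA
    exact ⟨t, (R.unitOF_of_mem_unitReps ht).2,
      R.inpE_sub_of_rep_eq (hsq t ht).1 (inOE_of_unitOE (hsq t ht).2) hf.1 hfO htf⟩
  · obtain ⟨t, ht, htf⟩ := Finset.mem_image.1 hfB
    refine ⟨S.sqε * t, unitOE_mul S.sqε_unitOE (R.unitOF_of_mem_unitReps ht).2, ?_⟩
    rw [show S.sqε * t * (S.sqε * t) = S.ε * (t * t) by rw [← S.sqε_sq]; ring]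
    exact R.inpE_sub_of_rep_eq (hεsq t ht).1 (inOE_of_unitOE (hεsq t ht).2) hf.1 hfO htf

theorem exists_mul_self_eq_of_unitOF {f : E} (hf : S.unitOF f) : ∃ v, v * v = f := by
  obtain ⟨w, hw, hwf⟩ := exists_unitOE_mul_self_sub hf
  exact S.hensel_sq f w hf.2.1 hf.2.2 hw.1 hw.2 hwf

/-- Hilbert 90 made explicit: `u = z / σ z` for `z = 1 + u`, so `u = N(z) / (σ z)²`, and the
norm `N(z)` is a unit of `O_F`. When `1 + u ∈ p_E` instead, `-u ≡ 1` is a square by Hensel. -/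
theorem exists_mul_self_eq_of_normOne (hu : S.unitOE u) (hn : S.normOne u) :
    ∃ v, v * v = u := by
  by_cases h : S.inpE 1 (u + 1)
  · obtain ⟨i, hi⟩ := S.exists_mul_self_eq_of_unitOF (f := -1)
      ⟨by rw [map_neg, map_one], neg_ne_zero.2 one_ne_zero, by rw [S.ν_neg, S.ν_one]⟩
    obtain ⟨w, hw⟩ := S.hensel_sq (-u) 1 (neg_ne_zero.2 hu.1) (by rw [S.ν_neg, hu.2])
      one_ne_zero S.ν_one (by rwa [mul_one, sub_neg_eq_add, add_comm])
    exact ⟨i * w, by linear_combination (w * w) * hi - hw⟩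
  · have hz : S.unitOE (1 + u) :=
      (unitOE_iff_not_inpE (inpE_add inOE_one (inOE_of_unitOE hu))).2 (by rwa [add_comm])
    have hσz := unitOE_σ hz
    obtain ⟨v, hv⟩ := S.exists_mul_self_eq_of_unitOF (f := (1 + u) * S.σ (1 + u))
      ⟨by rw [map_mul, S.σσ, mul_comm], unitOE_mul hz hσz⟩
    have huz : u * S.σ (1 + u) = 1 + u := by
      rw [map_add, map_one, mul_add, mul_one, show u * S.σ u = 1 from hn, add_comm]
    refine ⟨v * (S.σ (1 + u))⁻¹, ?_⟩
    have hσz0 := hσz.1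
    generalize S.σ (1 + u) = z at hσz0 hv huz
    field_simp
    linear_combination hv - z * huz

theorem σ_eq_neg_of_mul_self_eq {εE c : E} (hεE : S.unitOE εE)
    (hns : ¬ ∃ u, S.unitOE u ∧ u * u = εE) (hc : S.unitOE c) (hcc : c * c = εE * S.σ εE) :
    S.σ c = -c := by
  have hσcc : S.σ c * S.σ c = S.σ εE * εE := by rw [← map_mul, hcc, map_mul, S.σσ]
  rcases mul_eq_zero.1 (show (S.σ c - c) * (S.σ c + c) = 0 by linear_combination hσcc - hcc)
    with h | h
  · have hσc : S.σ c = c := sub_eq_zero.1 h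
    obtain ⟨v, hv⟩ := S.exists_mul_self_eq_of_unitOF ⟨hσc, hc⟩
    have hu : S.unitOE (εE / c) := by
      rw [div_eq_mul_inv]
      exact unitOE_mul hεE ⟨inv_ne_zero hc.1, by rw [S.ν_inv hc.1, hc.2, neg_zero]⟩
    have hn : S.normOne (εE / c) := by
      rw [normOne, map_div₀, hσc, div_mul_div_comm, ← hcc, div_self (mul_ne_zero hc.1 hc.1)]
    obtain ⟨w, hw⟩ := S.exists_mul_self_eq_of_normOne hu hn
    have hvw : v * w * (v * w) = εE := by
      rw [mul_mul_mul_comm, hv, hw, mul_div_cancel₀ _ hc.1]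
    exact absurd ⟨v * w, unitOE_of_mul_self (hvw ▸ hεE), hvw⟩ hns
  · exact eq_neg_of_add_eq_zero_left h

theorem inG_antidiag {x y : E} (h : S.σ y * x = 1) : S.inG !![0, x; y, 0] := by
  have h' : S.σ x * y = 1 := by simpa [S.σσ, mul_comm] using congrArg S.σ h
  simp only [inG, mbar, wmat]
  ext i j
  fin_cases i <;> fin_cases j <;> simp [Matrix.mul_apply, Fin.sum_univ_two, h, h']

theorem neg_mem_Tset {γ₁ γ₂ a b : E} (hab : a * S.σ a + b * S.σ b * (γ₁ * γ₂) = 1)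
    (hsq : S.inSqεF (S.σ a * b)) : !![a, -b * γ₁; -b * γ₂, a] ∈ S.Tset γ₁ γ₂ := by
  obtain ⟨f, hf, hab'⟩ := hsq
  refine ⟨a, -b, rfl, by rwa [map_neg, neg_mul_neg], -f, by rw [map_neg, hf], ?_⟩
  rw [mul_neg, hab', mul_neg]

theorem diag_conj_eq_antidiag_conj {εE c : E} (hεE : εE ≠ 0) (hc : c ≠ 0)
    (hcc : c * c = εE * S.σ εE) (a b : E) :
    !![εE, 0; 0, (S.σ εE)⁻¹] * !![a, b * 1; b * 1, a] * (!![εE, 0; 0, (S.σ εE)⁻¹])⁻¹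
      = !![0, -c; c⁻¹, 0] * !![a, -b * 1; -b * 1, a] * (!![0, -c; c⁻¹, 0])⁻¹ := by
  have hσεE : S.σ εE ≠ 0 := (map_ne_zero S.σ).2 hεE
  rw [Matrix.inv_def, Matrix.inv_def, Matrix.det_fin_two_of, Matrix.det_fin_two_of,
    Matrix.adjugate_fin_two_of, Matrix.adjugate_fin_two_of]
  ext i j
  fin_cases i <;> fin_cases j <;> simp [Matrix.mul_apply, Fin.sum_univ_two] <;> field_simp <;>
    first | linear_combination b * hcc | linear_combination (-b) * hcc

theorem image_diag_conj_Tset_eq {εE c : E} (hεE : εE ≠ 0) (hc : c ≠ 0)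
    (hcc : c * c = εE * S.σ εE) :
    (fun x => !![εE, 0; 0, (S.σ εE)⁻¹] * x * (!![εE, 0; 0, (S.σ εE)⁻¹])⁻¹) '' S.Tset 1 1
      = (fun x => !![0, -c; c⁻¹, 0] * x * (!![0, -c; c⁻¹, 0])⁻¹) '' S.Tset 1 1 := by
  have hconj := diag_conj_eq_antidiag_conj hεE hc hcc
  ext m
  constructor
  · rintro ⟨_, ⟨a, b, rfl, hab, hsq⟩, rfl⟩
    exact ⟨_, neg_mem_Tset hab hsq, (hconj a b).symm⟩
  · rintro ⟨_, ⟨a, b, rfl, hab, hsq⟩, rfl⟩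
    refine ⟨_, neg_mem_Tset hab hsq, ?_⟩
    simpa using hconj a (-b)

end Setting

/-- Let `ε_E ∈ O_E^×` be a non-square unit, `ξ = diag(ε_E, (ε̄_E)⁻¹)`, and
`c ∈ O_E^×` with `c² = ε_E·ε̄_E`.  Then `h = [[0,−c],[c⁻¹,0]]` lies in
`SU(1,1)(F) = {g ∈ G : det g = 1}` and `ξ·T_{1,1}·ξ⁻¹ = h·T_{1,1}·h⁻¹`. -/
theorem statement7 {E : Type*} [Field E] (S : Setting E)
    (εE : E) (hεE_unit : S.unitOE εE)
    (hεE_nonsquare : ¬ ∃ u : E, S.unitOE u ∧ u * u = εE)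
    (c : E) (hc_unit : S.unitOE c) (hc : c * c = εE * S.σ εE) :
    S.inG !![(0 : E), -c; c⁻¹, 0] ∧ (!![(0 : E), -c; c⁻¹, 0]).det = 1 ∧
    (fun x => !![εE, 0; 0, (S.σ εE)⁻¹] * x * (!![εE, 0; 0, (S.σ εE)⁻¹])⁻¹) '' S.Tset 1 1 =
      (fun x => !![(0 : E), -c; c⁻¹, 0] * x * (!![(0 : E), -c; c⁻¹, 0])⁻¹) '' S.Tset 1 1 := by
  have hσc := S.σ_eq_neg_of_mul_self_eq hεE_unit hεE_nonsquare hc_unit hc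
  refine ⟨S.inG_antidiag ?_, ?_, S.image_diag_conj_Tset_eq hεE_unit.1 hc_unit.1 hc⟩
  · rw [map_inv₀, hσc, inv_mul_cancel₀ (neg_ne_zero.2 hc_unit.1)]
  · rw [Matrix.det_fin_two_of, mul_zero, zero_sub, neg_mul, neg_neg, mul_inv_cancel₀ hc_unit.1]
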